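/- arXiv:0802.3248 — 3 statements merged into one kernel-verified Lean document; each statement's English description precedes it below -/
import Mathlib

section
/- If z is an eigenvalue of the block matrix M = [[A, B],[C, D]] with eigenvector (f, g), z is not an eigenvalue of D, and S(z) = A - zI - B(D - z)⁻¹C = φ(z)(M₀ - R(z)I) with φ(z) ≠ 0, then R(z) is an eigenvalue of M₀ with eigenvector f; conversely, if M₀ f = R(z) f then setting g = -(D - z)⁻¹ C f produces an eigenvector (f, g) of M with eigenvalue z. -/
/-! Eliminating `g` from the second block row of `(M - z) (f, g) = 0` gives `g = -(D - z)⁻¹ C f`;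
substituting into the first row leaves exactly the Schur complement `S(z) f = 0`, and
`S(z) = φ (M₀ - R)` with `φ ≠ 0` turns this into `M₀ f = R f`. Since `g` is determined by
`f`, a nonzero eigenvector of `M` has `f ≠ 0`. -/

open Matrix

namespace Matrix

variable {K n m : Type*} [CommRing K] [Fintype n] [Fintype m] [DecidableEq m]

theorem mulVec_eq_iff_eq_inv_mulVec {E : Matrix m m K} (hE : IsUnit E) {g w : m → K} :
    E *ᵥ g = w ↔ g = E⁻¹ *ᵥ w := by
  have hdet := (isUnit_iff_isUnit_det E).mp hE
  constructor
  · rintro rfl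
    rw [mulVec_mulVec, nonsing_inv_mul E hdet, one_mulVec]
  · rintro rfl
    rw [mulVec_mulVec, mul_nonsing_inv E hdet, one_mulVec]

theorem mulVec_add_mulVec_eq_smul_iff (C : Matrix m n K) (D : Matrix m m K) {z : K}
    (hE : IsUnit (D - z • 1)) (f : n → K) (g : m → K) :
    C *ᵥ f + D *ᵥ g = z • g ↔ g = -((D - z • 1)⁻¹ *ᵥ (C *ᵥ f)) := by
  have hrow : C *ᵥ f + D *ᵥ g = z • g ↔ (D - z • 1) *ᵥ g = -(C *ᵥ f) := by
    rw [sub_mulVec, smul_mulVec, one_mulVec]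
    constructor <;> intro h <;> linear_combination (norm := module) h
  rw [hrow, mulVec_eq_iff_eq_inv_mulVec hE, mulVec_neg]

theorem schur_mulVec [DecidableEq n] (A : Matrix n n K) (B : Matrix n m K) (C : Matrix m n K)
    (D : Matrix m m K) (z : K) (f : n → K) :
    (A - z • 1 - B * (D - z • 1)⁻¹ * C) *ᵥ f =
      A *ᵥ f + B *ᵥ -((D - z • 1)⁻¹ *ᵥ (C *ᵥ f)) - z • f := by
  rw [sub_mulVec, sub_mulVec, smul_mulVec, one_mulVec, ← mulVec_mulVec, ← mulVec_mulVec,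
    mulVec_neg]
  abel

theorem smul_sub_smul_one_mulVec_eq_zero_iff [NoZeroDivisors K] [DecidableEq n]
    (M₀ : Matrix n n K) {φ : K} (hφ : φ ≠ 0) (R : K) (f : n → K) :
    (φ • (M₀ - R • 1)) *ᵥ f = 0 ↔ M₀ *ᵥ f = R • f := by
  rw [smul_mulVec, sub_mulVec, smul_mulVec, one_mulVec, smul_eq_zero, sub_eq_zero,
    or_iff_right hφ]

end Matrix

theorem spectral_similarity_eigenvalue_correspondence_general (k m : ℕ)
    (A M₀ : Matrix (Fin k) (Fin k) ℝ) (B : Matrix (Fin k) (Fin m) ℝ)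
    (C : Matrix (Fin m) (Fin k) ℝ) (D : Matrix (Fin m) (Fin m) ℝ)
    (z φ R : ℝ) (hφ : φ ≠ 0)
    (hDinv : IsUnit (D - z • (1 : Matrix (Fin m) (Fin m) ℝ)))
    (hschur : A - z • (1 : Matrix (Fin k) (Fin k) ℝ) -
        B * (D - z • (1 : Matrix (Fin m) (Fin m) ℝ))⁻¹ * C =
      φ • (M₀ - R • (1 : Matrix (Fin k) (Fin k) ℝ))) :
    (∀ f : Fin k → ℝ, ∀ g : Fin m → ℝ, (f ≠ 0 ∨ g ≠ 0) →
        A.mulVec f + B.mulVec g = z • f → C.mulVec f + D.mulVec g = z • g →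
        f ≠ 0 ∧ M₀.mulVec f = R • f) ∧
    (∀ f : Fin k → ℝ, f ≠ 0 → M₀.mulVec f = R • f →
        let g := -((D - z • (1 : Matrix (Fin m) (Fin m) ℝ))⁻¹.mulVec (C.mulVec f))
        A.mulVec f + B.mulVec g = z • f ∧ C.mulVec f + D.mulVec g = z • g) := by
  have hS (f : Fin k → ℝ) := schur_mulVec A B C D z f
  rw [hschur] at hS
  constructor
  · intro f g hne hrow₁ hrow₂
    have hg := (mulVec_add_mulVec_eq_smul_iff C D hDinv f g).mp hrow₂
    have hf : f ≠ 0 := by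
      rintro rfl
      rw [mulVec_zero, mulVec_zero, neg_zero] at hg
      exact hne.elim (· rfl) (· hg)
    refine ⟨hf, (smul_sub_smul_one_mulVec_eq_zero_iff M₀ hφ R f).mp ?_⟩
    rw [hS, ← hg, hrow₁, sub_self]
  · intro f _ hM
    refine ⟨?_, (mulVec_add_mulVec_eq_smul_iff C D hDinv f _).mpr rfl⟩
    have := hS f
    rwa [(smul_sub_smul_one_mulVec_eq_zero_iff M₀ hφ R f).mpr hM, eq_comm, sub_eq_zero] at this

theorem spectral_similarity_eigenvalue_correspondence (k m : ℕ)
    (A M₀ : Matrix (Fin k) (Fin k) ℝ) (B : Matrix (Fin k) (Fin m) ℝ)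
    (C : Matrix (Fin m) (Fin k) ℝ) (D : Matrix (Fin m) (Fin m) ℝ)
    (z φ R : ℝ) (hφ : φ ≠ 0)
    (hD : ∀ g : Fin m → ℝ, D.mulVec g = z • g → g = 0)
    (hDinv : IsUnit (D - z • (1 : Matrix (Fin m) (Fin m) ℝ)))
    (hschur : A - z • (1 : Matrix (Fin k) (Fin k) ℝ) -
        B * (D - z • (1 : Matrix (Fin m) (Fin m) ℝ))⁻¹ * C =
      φ • (M₀ - R • (1 : Matrix (Fin k) (Fin k) ℝ))) :
    (∀ f : Fin k → ℝ, ∀ g : Fin m → ℝ, (f ≠ 0 ∨ g ≠ 0) →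
        A.mulVec f + B.mulVec g = z • f → C.mulVec f + D.mulVec g = z • g →
        f ≠ 0 ∧ M₀.mulVec f = R • f) ∧
    (∀ f : Fin k → ℝ, f ≠ 0 → M₀.mulVec f = R • f →
        let g := -((D - z • (1 : Matrix (Fin m) (Fin m) ℝ))⁻¹.mulVec (C.mulVec f))
        A.mulVec f + B.mulVec g = z • f ∧ C.mulVec f + D.mulVec g = z • g) :=
  spectral_similarity_eigenvalue_correspondence_general k m A M₀ B C D z φ R hφ hDinv hschur
end

section
/- Let ψ(x) = (3 - √(9 - 4x))/4. For x in a sufficiently small neighborhood of 0 (e.g. |x| ≤ 1), the sequence 6ⁿ·ψⁿ(x) (n-fold composition) converges; the limit function Ψ satisfies Ψ(0) = 0. -/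
/-!
Since `ψ` inverts `y ↦ 6y - 4y²` near `0`, one has `6ψ(y) - y = 4ψ(y)²`, and on `[-1, 1]` also
`|ψ(y)| ≤ |y|/5`. Hence `|ψⁿ(x)| ≤ 5⁻ⁿ|x|`, and consecutive terms of `6ⁿψⁿ(x)` differ by
`6ⁿ · 4ψⁿ⁺¹(x)² = O((6/25)ⁿ)`, so the sequence is Cauchy.
-/

open Filter Set Metric

theorem norm_iterate_le_of_norm_le_mul {E : Type*} [SeminormedAddCommGroup E] {f : E → E}
    {s : Set E} {q : ℝ} (hf : MapsTo f s s) (hq : 0 ≤ q)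
    (hfq : ∀ y ∈ s, ‖f y‖ ≤ q * ‖y‖) {x : E} (hx : x ∈ s) (n : ℕ) :
    ‖f^[n] x‖ ≤ q ^ n * ‖x‖ := by
  induction n with
  | zero => simp
  | succ n ih =>
    rw [Function.iterate_succ_apply', pow_succ', mul_assoc]
    exact (hfq _ (hf.iterate n hx)).trans (mul_le_mul_of_nonneg_left ih hq)

theorem cauchySeq_pow_mul_iterate {𝕜 : Type*} [NormedField 𝕜] {f : 𝕜 → 𝕜} {s : Set 𝕜}
    {q : ℝ} (hf : MapsTo f s s) (hq : 0 ≤ q) (hfq : ∀ y ∈ s, ‖f y‖ ≤ q * ‖y‖)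
    {c : 𝕜} {C : ℝ} (hC : 0 ≤ C) (hfc : ∀ y ∈ s, ‖c * f y - y‖ ≤ C * ‖y‖ ^ 2)
    (hcq : ‖c‖ * q ^ 2 < 1) {x : 𝕜} (hx : x ∈ s) :
    CauchySeq fun n => c ^ n * f^[n] x := by
  refine cauchySeq_of_le_geometric (‖c‖ * q ^ 2) (C * ‖x‖ ^ 2) hcq fun n => ?_
  have hxn := hf.iterate n hx
  calc dist (c ^ n * f^[n] x) (c ^ (n + 1) * f^[n + 1] x)
      = ‖c‖ ^ n * ‖c * f (f^[n] x) - f^[n] x‖ := by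
        rw [dist_comm, dist_eq_norm, Function.iterate_succ_apply', ← norm_pow, ← norm_mul]
        congr 1
        ring
    _ ≤ ‖c‖ ^ n * (C * (q ^ n * ‖x‖) ^ 2) := by
        gcongr
        exact (hfc _ hxn).trans (by gcongr; exact norm_iterate_le_of_norm_le_mul hf hq hfq hx n)
    _ = C * ‖x‖ ^ 2 * (‖c‖ * q ^ 2) ^ n := by ring

noncomputable def psi (x : ℝ) : ℝ := (3 - Real.sqrt (9 - 4 * x)) / 4

theorem psi_zero : psi 0 = 0 := by
  norm_num [psi, show (9 : ℝ) = 3 ^ 2 by norm_num]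

theorem six_mul_psi_sub (y : ℝ) (hy : y ≤ 9 / 4) : 6 * psi y - y = 4 * psi y ^ 2 := by
  have hs := Real.sq_sqrt (show 0 ≤ 9 - 4 * y by linarith)
  unfold psi
  linear_combination (-1 / 4) * hs

theorem abs_psi_le (y : ℝ) (hy : |y| ≤ 1) : |psi y| ≤ |y| / 5 := by
  obtain ⟨hy₁, hy₂⟩ := abs_le.mp hy
  set s := Real.sqrt (9 - 4 * y)
  have hs : s ^ 2 = 9 - 4 * y := Real.sq_sqrt (by linarith)
  have hs₂ : 2 ≤ s := Real.le_sqrt_of_sq_le (by linarith)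
  have hpsi : psi y = y / (3 + s) := by
    rw [psi, div_eq_div_iff (by norm_num) (by linarith)]
    linear_combination (-1) * hs
  rw [hpsi, abs_div, abs_of_pos (by linarith : (0 : ℝ) < 3 + s)]
  exact div_le_div_of_nonneg_left (abs_nonneg y) (by norm_num) (by linarith)

theorem norm_psi_le (y : ℝ) (hy : y ∈ closedBall 0 1) : ‖psi y‖ ≤ 1 / 5 * ‖y‖ := by
  rw [mem_closedBall_zero_iff, Real.norm_eq_abs] at hy
  simpa [div_eq_inv_mul] using abs_psi_le y hy

theorem mapsTo_psi_closedBall : MapsTo psi (closedBall 0 1) (closedBall 0 1) := fun y hy =>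
  mem_closedBall_zero_iff.mpr <| (norm_psi_le y hy).trans <| by
    linarith [mem_closedBall_zero_iff.mp hy]

theorem norm_six_mul_psi_sub_le (y : ℝ) (hy : y ∈ closedBall 0 1) :
    ‖6 * psi y - y‖ ≤ 4 / 25 * ‖y‖ ^ 2 := by
  rw [mem_closedBall_zero_iff, Real.norm_eq_abs] at hy
  rw [six_mul_psi_sub y (by linarith [le_abs_self y]), Real.norm_eq_abs, Real.norm_eq_abs,
    abs_mul, abs_pow, abs_of_pos (by norm_num : (0 : ℝ) < 4)]
  nlinarith [abs_psi_le y hy, abs_nonneg (psi y)]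

theorem koenigs_linearization_limit_exists :
    let ψ : ℝ → ℝ := fun x => (3 - Real.sqrt (9 - 4 * x)) / 4
    (∀ x : ℝ, |x| ≤ 1 →
        ∃ L : ℝ, Filter.Tendsto (fun n : ℕ => 6 ^ n * ψ^[n] x) Filter.atTop (nhds L)) ∧
    Filter.Tendsto (fun n : ℕ => (6 : ℝ) ^ n * ψ^[n] 0) Filter.atTop (nhds 0) := by
  intro ψ
  refine ⟨fun x hx => cauchySeq_tendsto_of_complete <|
    cauchySeq_pow_mul_iterate mapsTo_psi_closedBall (by norm_num) norm_psi_le (by norm_num)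
      norm_six_mul_psi_sub_le (by norm_num) (mem_closedBall_zero_iff.mpr hx), ?_⟩
  change Tendsto (fun n : ℕ => (6 : ℝ) ^ n * psi^[n] 0) atTop (nhds 0)
  simp [Function.iterate_fixed psi_zero]
end

section
/- If R(z) = 6z - 4z² and λₙ₊₁ is chosen for each n with λₙ₊₁ ∈ R⁻¹(λₙ) via λₙ₊₁ = (3 + εₙ₊₁√(9 - 4λₙ))/4 with εₙ = ±1, and εₙ = -1 for all n ≥ n₀, with λ_{n₀} ∈ [0, 9/4], then the sequence 6ⁿλₙ converges as n → ∞. -/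
/-!
Write `ψ x = (3 - √(9 - 4x)) / 4`. For `x ∈ [0, 9/4]` it is a preimage of `x` under
`R z = 6z - 4z²`, so `6 ψ x = x + 4 (ψ x)²`, and `0 ≤ ψ x ≤ x / 2`. Along the orbit
`xₖ = ψ^[k] x` the sequence `6ᵏ xₖ` is therefore nondecreasing, and
`6ᵏ⁺¹ xₖ₊₁ ≤ 6ᵏ xₖ (1 + xₖ)` with `xₖ ≤ x / 2ᵏ` summable, which bounds it
by `x · exp (∑ₖ xₖ)`. A bounded monotone sequence converges.
-/

open Filter Finset Set

theorem le_mul_prod_one_add_of_le_mul_one_add {a b : ℕ → ℝ} (hb : ∀ n, 0 ≤ b n)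
    (h : ∀ n, a (n + 1) ≤ a n * (1 + b n)) (n : ℕ) :
    a n ≤ a 0 * ∏ k ∈ range n, (1 + b k) := by
  induction n with
  | zero => simp
  | succ n ih =>
    calc a (n + 1) ≤ a n * (1 + b n) := h n
      _ ≤ a 0 * (∏ k ∈ range n, (1 + b k)) * (1 + b n) :=
        mul_le_mul_of_nonneg_right ih (by linarith [hb n])
      _ = a 0 * ∏ k ∈ range (n + 1), (1 + b k) := by rw [prod_range_succ, mul_assoc]

theorem bddAbove_range_of_le_mul_one_add {a b : ℕ → ℝ} (hb : ∀ n, 0 ≤ b n)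
    (hsum : Summable b) (h : ∀ n, a (n + 1) ≤ a n * (1 + b n)) (ha₀ : 0 ≤ a 0) :
    BddAbove (range a) := by
  refine ⟨a 0 * Real.exp (∑' k, b k), ?_⟩
  rintro _ ⟨n, rfl⟩
  calc a n ≤ a 0 * ∏ k ∈ range n, (1 + b k) :=
      le_mul_prod_one_add_of_le_mul_one_add hb h n
    _ ≤ a 0 * Real.exp (∑ k ∈ range n, b k) :=
      mul_le_mul_of_nonneg_left (Real.prod_one_add_le_exp_sum _ hb) ha₀
    _ ≤ a 0 * Real.exp (∑' k, b k) :=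
      mul_le_mul_of_nonneg_left (Real.exp_le_exp.2 (hsum.sum_le_tsum _ fun k _ => hb k)) ha₀

/-- The branch of `R⁻¹`, `R z = 6z - 4z²`, that fixes `0`. -/
noncomputable def decimationInv (x : ℝ) : ℝ :=
  (3 - Real.sqrt (9 - 4 * x)) / 4

section decimationInv

variable {x : ℝ}

theorem six_mul_decimationInv_sub (hx : x ≤ 9 / 4) :
    6 * decimationInv x - 4 * decimationInv x ^ 2 = x := by
  have hs : Real.sqrt (9 - 4 * x) ^ 2 = 9 - 4 * x := Real.sq_sqrt (by linarith)
  unfold decimationInv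
  linear_combination (-1 / 4 : ℝ) * hs

theorem decimationInv_nonneg (hx : 0 ≤ x) : 0 ≤ decimationInv x := by
  have : Real.sqrt (9 - 4 * x) ≤ 3 :=
    Real.sqrt_le_iff.2 ⟨by norm_num, by linarith⟩
  unfold decimationInv
  linarith

theorem decimationInv_le_half (hx₀ : 0 ≤ x) (hx : x ≤ 9 / 4) : decimationInv x ≤ x / 2 := by
  have hR := six_mul_decimationInv_sub hx
  have h₀ := decimationInv_nonneg hx₀
  have h₃ : decimationInv x ≤ 3 / 4 := by
    unfold decimationInv
    linarith [Real.sqrt_nonneg (9 - 4 * x)]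
  nlinarith

theorem le_six_mul_decimationInv (hx : x ≤ 9 / 4) : x ≤ 6 * decimationInv x := by
  nlinarith [six_mul_decimationInv_sub hx, sq_nonneg (decimationInv x)]

theorem six_mul_decimationInv_le (hx₀ : 0 ≤ x) (hx : x ≤ 9 / 4) :
    6 * decimationInv x ≤ x * (1 + x) := by
  have h₀ := decimationInv_nonneg hx₀
  have h₂ := decimationInv_le_half hx₀ hx
  nlinarith [six_mul_decimationInv_sub hx]

theorem iterate_decimationInv_mem_Icc (hx : x ∈ Icc (0 : ℝ) (9 / 4)) (k : ℕ) :
    decimationInv^[k] x ∈ Icc (0 : ℝ) (9 / 4) := by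
  induction k with
  | zero => exact hx
  | succ k ih =>
    rw [Function.iterate_succ_apply']
    exact ⟨decimationInv_nonneg ih.1, by linarith [decimationInv_le_half ih.1 ih.2, ih.1, ih.2]⟩

theorem iterate_decimationInv_le (hx : x ∈ Icc (0 : ℝ) (9 / 4)) (k : ℕ) :
    decimationInv^[k] x ≤ x * (1 / 2) ^ k := by
  induction k with
  | zero => simp
  | succ k ih =>
    obtain ⟨h₀, h₉⟩ := iterate_decimationInv_mem_Icc hx k
    rw [Function.iterate_succ_apply', pow_succ]
    linarith [decimationInv_le_half h₀ h₉]

theorem summable_iterate_decimationInv (hx : x ∈ Icc (0 : ℝ) (9 / 4)) :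
    Summable fun k => decimationInv^[k] x :=
  Summable.of_nonneg_of_le (fun k => (iterate_decimationInv_mem_Icc hx k).1)
    (iterate_decimationInv_le hx) (summable_geometric_two.mul_left x)

theorem tendsto_six_pow_mul_iterate_decimationInv (hx : x ∈ Icc (0 : ℝ) (9 / 4)) :
    ∃ L, Tendsto (fun k : ℕ => 6 ^ k * decimationInv^[k] x) atTop (nhds L) := by
  set a : ℕ → ℝ := fun k => 6 ^ k * decimationInv^[k] x
  have step (k : ℕ) : a (k + 1) = 6 ^ k * (6 * decimationInv (decimationInv^[k] x)) := by
    simp only [a, Function.iterate_succ_apply', pow_succ, mul_assoc]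
  have hmono : Monotone a := monotone_nat_of_le_succ fun k => by
    obtain ⟨_, h₉⟩ := iterate_decimationInv_mem_Icc hx k
    rw [step]
    exact mul_le_mul_of_nonneg_left (le_six_mul_decimationInv h₉) (by positivity)
  have hbdd : BddAbove (range a) := by
    refine bddAbove_range_of_le_mul_one_add (fun k => (iterate_decimationInv_mem_Icc hx k).1)
      (summable_iterate_decimationInv hx) (fun k => ?_) (by simpa [a] using hx.1)
    obtain ⟨h₀, h₉⟩ := iterate_decimationInv_mem_Icc hx k
    rw [step, mul_assoc]
    exact mul_le_mul_of_nonneg_left (six_mul_decimationInv_le h₀ h₉) (by positivity)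
  exact ⟨_, tendsto_atTop_ciSup hmono hbdd⟩

end decimationInv

theorem spectral_decimation_eigenvalue_limit (lam : ℕ → ℝ) (n₀ : ℕ)
    (h₀ : lam n₀ ∈ Set.Icc (0 : ℝ) (9 / 4))
    (hrec : ∀ n ≥ n₀, lam (n + 1) = (3 - Real.sqrt (9 - 4 * lam n)) / 4) :
    ∃ L : ℝ, Filter.Tendsto (fun n : ℕ => 6 ^ n * lam n) Filter.atTop (nhds L) := by
  have horbit (k : ℕ) : lam (k + n₀) = decimationInv^[k] (lam n₀) := by
    induction k with
    | zero => simp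
    | succ k ih =>
      rw [Function.iterate_succ_apply', ← ih, add_right_comm, hrec _ (by omega), decimationInv]
  obtain ⟨L, hL⟩ := tendsto_six_pow_mul_iterate_decimationInv h₀
  refine ⟨6 ^ n₀ * L, (tendsto_add_atTop_iff_nat n₀).1 ?_⟩
  refine (hL.const_mul (6 ^ n₀)).congr fun k => ?_
  rw [horbit, pow_add]
  ring
end
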